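/- Let f, g ∈ L^∞ and z ∈ 𝔻. Then, as bounded operators on H², H_f* H_g − T_{φ_z}* H_f* H_g T_{φ_z} = V [(H_f k_z) ⊗ (H_g k_z)] V, where the middle operator acts on [H²]^⊥ and V is applied on both sides (V maps H² onto [H²]^⊥ and V = V⁻¹). -/

import Mathlib

open MeasureTheory Filter Topology ComplexConjugate ENNReal

noncomputable section

namespace HTTO

instance fact2pi : Fact (0 < 2 * Real.pi) := ⟨Real.two_pi_pos⟩

/-- The unit circle, modeled additively as `ℝ / 2πℤ`; the point `x` corresponds to `e^{ix}`. -/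
abbrev Circ : Type := AddCircle (2 * Real.pi)

/-- Normalized Haar (Lebesgue) measure on the circle. -/
abbrev hm : Measure Circ := AddCircle.haarAddCircle

/-- The Lebesgue space `L²` of the circle. -/
abbrev L2 : Type := Lp ℂ 2 hm

/-- The Lebesgue space `L^∞` of the circle. -/
abbrev Linf : Type := Lp ℂ ⊤ hm

/-- The `n`-th Fourier coefficient, as a continuous linear functional on `L²`. -/
def coeffCLM (n : ℤ) : L2 →L[ℂ] ℂ :=
  LinearMap.mkContinuous
    { toFun := fun f => fourierBasis.repr f n
      map_add' := fun f g => by simp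
      map_smul' := fun c f => by simp }
    1
    (fun f => by
      rw [one_mul]
      calc ‖fourierBasis.repr f n‖ ≤ ‖fourierBasis.repr f‖ :=
            lp.norm_apply_le_norm (by norm_num) _ n
        _ = ‖f‖ := by simp)

/-- The Hardy space `H²`: the subspace of `L²` of functions whose negative Fourier
coefficients vanish. -/
def H2 : Submodule ℂ L2 := ⨅ n : {m : ℤ // m < 0}, LinearMap.ker (coeffCLM n.1 : L2 →ₗ[ℂ] ℂ)

theorem isClosed_H2 : IsClosed (H2 : Set L2) := by
  have h : ((H2 : Submodule ℂ L2) : Set L2)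
      = ⋂ n : {m : ℤ // m < 0}, ↑(LinearMap.ker (coeffCLM n.1 : L2 →ₗ[ℂ] ℂ)) := Submodule.coe_iInf _
  rw [h]
  exact isClosed_iInter fun n => ContinuousLinearMap.isClosed_ker _

instance : CompleteSpace H2 := isClosed_H2.completeSpace_coe

/-- The orthogonal (Szegő/Riesz) projection `P` of `L²` onto `H²`,
as an endomorphism of `L²`. -/
def Pp : L2 →L[ℂ] L2 := H2.subtypeL.comp (Submodule.orthogonalProjectionOnto H2)

/-- The `L²` function `f * g`, for `f ∈ L^∞` and `g ∈ L²`, is in `L²`. -/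
theorem mulMem (f : Linf) (g : L2) : MemLp (⇑f • ⇑g) 2 hm :=
  (Lp.memLp g).smul (Lp.memLp f)

/-- Pointwise multiplication `g ↦ f g` of an `L²` function by an `L^∞` function. -/
def mulFun (f : Linf) (g : L2) : L2 := (mulMem f g).toLp (⇑f • ⇑g)

theorem coeFn_mulFun (f : Linf) (g : L2) : mulFun f g =ᵐ[hm] ⇑f • ⇑g :=
  MemLp.coeFn_toLp _

theorem mulFun_add (f : Linf) (g₁ g₂ : L2) :
    mulFun f (g₁ + g₂) = mulFun f g₁ + mulFun f g₂ := by
  apply Lp.ext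
  filter_upwards [coeFn_mulFun f (g₁ + g₂), coeFn_mulFun f g₁, coeFn_mulFun f g₂,
    Lp.coeFn_add (mulFun f g₁) (mulFun f g₂), Lp.coeFn_add g₁ g₂] with x h1 h2 h3 h4 h5
  simp only [h1, h4, Pi.add_apply, h2, h3, Pi.smul_apply, h5, smul_eq_mul, Pi.mul_apply, mul_add]

theorem mulFun_smul (f : Linf) (c : ℂ) (g : L2) :
    mulFun f (c • g) = c • mulFun f g := by
  apply Lp.ext
  filter_upwards [coeFn_mulFun f (c • g), coeFn_mulFun f g,
    Lp.coeFn_smul c (mulFun f g), Lp.coeFn_smul c g] with x h1 h2 h3 h4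
  simp only [h1, h3, Pi.smul_apply, h2, h4, smul_eq_mul, Pi.mul_apply]
  ring

theorem mulFun_norm (f : Linf) (g : L2) : ‖mulFun f g‖ ≤ ‖f‖ * ‖g‖ := by
  rw [mulFun, Lp.norm_toLp]
  calc (eLpNorm (⇑f • ⇑g) 2 hm).toReal
      ≤ (eLpNorm (⇑f) ⊤ hm * eLpNorm (⇑g) 2 hm).toReal :=
        ENNReal.toReal_mono
          (ENNReal.mul_ne_top (Lp.eLpNorm_ne_top f) (Lp.eLpNorm_ne_top g))
          (eLpNorm_smul_le_eLpNorm_top_mul_eLpNorm 2 (Lp.aestronglyMeasurable g) ⇑f)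
    _ = ‖f‖ * ‖g‖ := by rw [ENNReal.toReal_mul]; rfl

/-- The multiplication operator `M_f : L² → L²`, `g ↦ f g`, for a symbol `f ∈ L^∞`. -/
def mulCL (f : Linf) : L2 →L[ℂ] L2 :=
  LinearMap.mkContinuous
    { toFun := mulFun f
      map_add' := mulFun_add f
      map_smul' := mulFun_smul f }
    ‖f‖ (mulFun_norm f)

/-- The product of two `L^∞` functions, as an element of `L^∞`. -/
def mulInf (f g : Linf) : Linf :=
  ((Lp.memLp g).smul (Lp.memLp f)).toLp (⇑f • ⇑g)

/-- The complex conjugate of an `Lᵖ` function. -/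
def conjLp {p : ℝ≥0∞} (f : Lp ℂ p hm) : Lp ℂ p hm :=
  MemLp.toLp (fun x => conj (f x))
    (MemLp.of_le (Lp.memLp f)
      (RCLike.continuous_conj.comp_aestronglyMeasurable (Lp.aestronglyMeasurable f))
      (Eventually.of_forall fun x => by simp))

/-- The embedding of `L^∞` into `L²` (the measure is finite). -/
def inclL2 (f : Linf) : L2 := MemLp.toLp ⇑f ((Lp.memLp f).mono_exponent le_top)

/-- The constant function `1` in `L^∞`. -/
def oneInf : Linf := Lp.const ⊤ hm (1 : ℂ)

/-- The constant function `1` in `L²`. -/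
def oneL2 : L2 := Lp.const 2 hm (1 : ℂ)

/-- `f ∈ L^∞` is constant (a.e.). -/
def IsConst (f : Linf) : Prop := ∃ c : ℂ, f = Lp.const ⊤ hm c

/-- `θ ∈ L^∞` is an inner function: it is analytic (i.e. lies in `H^∞ = H² ∩ L^∞`)
and has modulus `1` a.e. on the circle. -/
structure IsInner (θ : Linf) : Prop where
  analytic : inclL2 θ ∈ H2
  unimodular : ∀ᵐ x ∂hm, ‖θ x‖ = 1

/-- The complementary projection `I - P` of `L²` onto `[H²]^⊥`. -/
def Qm : L2 →L[ℂ] L2 := ContinuousLinearMap.id ℂ L2 - Pp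

/-- The Toeplitz operator `T_f h = P (f h)` with symbol `f ∈ L^∞`, realized as the
endomorphism `P M_f P` of `L²` (i.e. extended by zero on `[H²]^⊥`). -/
def toep (f : Linf) : L2 →L[ℂ] L2 := Pp ∘L mulCL f ∘L Pp

/-- The Hankel operator `H_f h = (I - P)(f h)` with symbol `f ∈ L^∞`, realized as the
operator `(I-P) M_f P` on `L²` (i.e. extended by zero on `[H²]^⊥`). -/
def hank (f : Linf) : L2 →L[ℂ] L2 := Qm ∘L mulCL f ∘L Pp

/-- The operator `S_f h = (I - P)(f h)` on `[H²]^⊥` with symbol `f ∈ L^∞`, realized as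
`(I-P) M_f (I-P)` on `L²` (i.e. extended by zero on `H²`). -/
def sop (f : Linf) : L2 →L[ℂ] L2 := Qm ∘L mulCL f ∘L Qm

/-- The rank one operator `x ⊗ y : h ↦ ⟨h, y⟩ x`. -/
def rankOne (x y : L2) : L2 →L[ℂ] L2 := (innerSL ℂ y).smulRight x

/-- The subspace `θ H²` of `L²`. -/
def thetaH2 (θ : Linf) : Submodule ℂ L2 := H2.map (mulCL θ).toLinearMap

/-- The model space `K_θ = H² ⊖ θH² = H² ∩ (θH²)^⊥`. -/
def Ktheta (θ : Linf) : Submodule ℂ L2 := H2 ⊓ (thetaH2 θ)ᗮ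

/-- The orthogonal projection `P_θ` of `L²` onto the model space `K_θ`, given by the
formula `P_θ f = P f - θ P(conj θ · f)`. -/
def Pth (θ : Linf) : L2 →L[ℂ] L2 := Pp - mulCL θ ∘L Pp ∘L mulCL (conjLp θ)

/-- The truncated Toeplitz operator `A^θ_φ u = P_θ(φ u)` with symbol `φ ∈ L²`, applied to a
bounded function `u` (in the statements, `u` ranges over `K_θ ∩ H^∞`). -/
def ttoepApply (θ : Linf) (φ : L2) (u : Linf) : L2 := Pth θ (mulCL u φ)

/-- The truncated Hankel operator `H^θ_φ u = (I - P_θ)(φ u)` with symbol `φ ∈ L²`, applied to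
a bounded function `u` (in the statements, `u` ranges over `K_θ ∩ H^∞`). -/
def thankApply (θ : Linf) (φ : L2) (u : Linf) : L2 := mulCL u φ - Pth θ (mulCL u φ)

/-- The truncated Toeplitz operator `A^θ_f = P_θ M_f P_θ` with bounded symbol `f ∈ L^∞`,
extended by zero on the orthogonal complement of `K_θ`. -/
def ttoep (θ f : Linf) : L2 →L[ℂ] L2 := Pth θ ∘L mulCL f ∘L Pth θ

/-- The truncated Hankel operator `H^θ_f = (I - P_θ) M_f P_θ` with bounded symbol `f ∈ L^∞`,
extended by zero on the orthogonal complement of `K_θ`. -/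
def thank (θ f : Linf) : L2 →L[ℂ] L2 :=
  (ContinuousLinearMap.id ℂ L2 - Pth θ) ∘L mulCL f ∘L Pth θ

/-- The antiunitary operator `V` on `L²`: `(V f)(w) = conj w * conj (f w)`. -/
def Vop (f : L2) : L2 := mulCL (fourierLp ⊤ (-1)) (conjLp f)

theorem negMP : MeasurePreserving (fun x : Circ => -x) hm hm :=
  Measure.measurePreserving_neg hm

/-- The unitary operator `U` on `L²`: `(U f)(w) = conj w * f (conj w)`. -/
def Uop (f : L2) : L2 :=
  mulCL (fourierLp ⊤ (-1)) (Lp.compMeasurePreserving (fun x : Circ => -x) negMP f)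

/-- The normalized reproducing kernel `k_z(w) = √(1-|z|²) / (1 - conj z * w)` of `H²`,
as a continuous function on the circle (`w = e^{ix}`). -/
def kC (z : ℂ) (hz : ‖z‖ < 1) : C(Circ, ℂ) :=
  ⟨fun x => (Real.sqrt (1 - ‖z‖ ^ 2) : ℂ) / (1 - conj z * fourier 1 x), by
    apply Continuous.div continuous_const
    · exact Continuous.sub continuous_const (Continuous.mul continuous_const (map_continuous _))
    · intro x
      refine sub_ne_zero.2 fun h => absurd (congrArg norm h) ?_
      have h1 : ‖fourier 1 x‖ = 1 := Circle.norm_coe _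
      simp only [norm_mul, RCLike.norm_conj, h1, mul_one, norm_one]
      exact fun hc => absurd hc.symm (ne_of_lt hz)⟩

open Classical in
/-- The normalized reproducing kernel `k_z` as an element of `L²` (junk value `0` if `|z| ≥ 1`). -/
def kLp (z : ℂ) : L2 :=
  if hz : ‖z‖ < 1 then ContinuousMap.toLp 2 hm ℂ (kC z hz) else 0

/-- The Möbius transform `φ_z(w) = (z - w)/(1 - conj z * w)`, as a continuous function. -/
def phiC (z : ℂ) (hz : ‖z‖ < 1) : C(Circ, ℂ) :=
  ⟨fun x => (z - fourier 1 x) / (1 - conj z * fourier 1 x), by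
    apply Continuous.div
    · exact Continuous.sub continuous_const (map_continuous _)
    · exact Continuous.sub continuous_const (Continuous.mul continuous_const (map_continuous _))
    · intro x
      refine sub_ne_zero.2 fun h => absurd (congrArg norm h) ?_
      have h1 : ‖fourier 1 x‖ = 1 := Circle.norm_coe _
      simp only [norm_mul, RCLike.norm_conj, h1, mul_one, norm_one]
      exact fun hc => absurd hc.symm (ne_of_lt hz)⟩

open Classical in
/-- The Möbius transform `φ_z` as an element of `L^∞` (junk value `0` if `|z| ≥ 1`). -/
def phiInf (z : ℂ) : Linf :=
  if hz : ‖z‖ < 1 then ContinuousMap.toLp ⊤ hm ℂ (phiC z hz) else 0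

/-- The filter of tangential approach `|z| → 1⁻` inside the unit disk. -/
def toBoundary : Filter ℂ := Filter.comap (fun z => ‖z‖) (𝓝[<] (1 : ℝ))

/-- Membership in `K_θ + ℂθ = {h ∈ H² : θ conj h ∈ H²}`. -/
def MemKC (θ : Linf) (h : L2) : Prop := h ∈ H2 ∧ mulCL θ (conjLp h) ∈ H2



/-! ### Auxiliary lemmas -/

local notation "⟪" x ", " y "⟫" => @inner ℂ _ _ x y

theorem inner_L2 (a b : L2) : ⟪a, b⟫ = ∫ x, conj (a x) * b x ∂hm := by
  rw [MeasureTheory.L2.inner_def]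
  congr 1
  funext x
  rw [RCLike.inner_apply']

def E2 (n : ℤ) : L2 := fourierLp 2 n

def Einf (n : ℤ) : Linf := fourierLp ⊤ n

theorem inner_E2 (n : ℤ) (x : L2) : ⟪E2 n, x⟫ = fourierBasis.repr x n := by
  rw [fourierBasis.repr_apply_apply, coe_fourierBasis]; rfl

theorem mem_H2_iff {h : L2} : h ∈ H2 ↔ ∀ n < 0, ⟪E2 n, h⟫ = 0 := by
  simp only [H2, Submodule.mem_iInf, LinearMap.mem_ker]
  constructor
  · intro H n hn; rw [inner_E2]; exact H ⟨n, hn⟩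
  · intro H n; have := H n.1 n.2; rwa [inner_E2] at this

theorem mem_H2perp_iff {x : L2} : x ∈ H2ᗮ ↔ ∀ n : ℤ, 0 ≤ n → ⟪E2 n, x⟫ = 0 := by
  constructor
  · intro hx n hn
    refine hx _ ?_
    rw [mem_H2_iff]
    intro m hmm
    have := (orthonormal_iff_ite.mp (orthonormal_fourier (T := 2 * Real.pi))) m n
    simp only [E2]
    rw [this]
    rw [if_neg (by omega)]
  · intro H y hy
    rw [← fourierBasis.tsum_inner_mul_inner y x]
    rw [mem_H2_iff] at hy
    have : ∀ n : ℤ, ⟪y, fourierBasis n⟫ * ⟪fourierBasis n, x⟫ = 0 := by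
      intro n
      rcases lt_or_ge n 0 with h | h
      · have h0 : ⟪E2 n, y⟫ = 0 := hy n h
        have h1 : ⟪y, (fourierBasis : HilbertBasis ℤ ℂ L2) n⟫ = 0 := by
          rw [← inner_conj_symm]
          rw [inner_E2] at h0
          rw [fourierBasis.repr_apply_apply] at h0
          rw [h0, map_zero]
        rw [h1, zero_mul]
      · have h0 := H n h
        rw [inner_E2, fourierBasis.repr_apply_apply] at h0
        rw [h0, mul_zero]
    rw [tsum_congr this, tsum_zero]

/-! ### Projection lemmas -/

theorem Pp_apply (x : L2) : Pp x = (H2.orthogonalProjectionOnto x : L2) := rfl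

theorem Pp_mem (x : L2) : Pp x ∈ H2 := (H2.orthogonalProjectionOnto x).2

theorem Pp_eq_self {h : L2} (hh : h ∈ H2) : Pp h = h := by
  rw [Pp_apply]; exact Submodule.starProjection_eq_self_iff.mpr hh

theorem sub_Pp_mem (x : L2) : x - Pp x ∈ H2ᗮ :=
  Submodule.sub_starProjection_mem_orthogonal (K := H2) x

theorem Qm_apply (x : L2) : Qm x = x - Pp x := rfl

theorem Qm_mem (x : L2) : Qm x ∈ H2ᗮ := by rw [Qm_apply]; exact sub_Pp_mem x

theorem Qm_eq_zero {h : L2} (hh : h ∈ H2) : Qm h = 0 := by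
  rw [Qm_apply, Pp_eq_self hh, sub_self]

theorem inner_H2_perp {y x : L2} (hy : y ∈ H2) (hx : x ∈ H2ᗮ) : ⟪y, x⟫ = 0 := hx y hy

theorem inner_perp_H2 {x y : L2} (hx : x ∈ H2ᗮ) (hy : y ∈ H2) : ⟪x, y⟫ = 0 := by
  rw [← inner_conj_symm, inner_H2_perp hy hx, map_zero]

theorem inner_Pp_left {y : L2} (hy : y ∈ H2) (x : L2) : ⟪y, Pp x⟫ = ⟪y, x⟫ := by
  have h1 : ⟪y, x - Pp x⟫ = 0 := inner_H2_perp hy (sub_Pp_mem x)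
  rw [inner_sub_right] at h1
  linear_combination (norm := ring_nf) -h1

theorem inner_Qm_left {y : L2} (hy : y ∈ H2ᗮ) (x : L2) : ⟪y, Qm x⟫ = ⟪y, x⟫ := by
  rw [Qm_apply, inner_sub_right, inner_perp_H2 hy (Pp_mem x), sub_zero]

theorem inner_decomp (a b : L2) : ⟪a, b⟫ = ⟪Pp a, Pp b⟫ + ⟪Qm a, Qm b⟫ := by
  have ha : a = Pp a + Qm a := by rw [Qm_apply]; abel
  have hb : b = Pp b + Qm b := by rw [Qm_apply]; abel
  conv_lhs => rw [ha, hb]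
  rw [inner_add_left, inner_add_right, inner_add_right]
  rw [inner_H2_perp (Pp_mem a) (Qm_mem b), inner_perp_H2 (Qm_mem a) (Pp_mem b)]
  ring

/-! ### Multiplication lemmas -/

theorem coeFn_mulCL (f : Linf) (g : L2) :
    mulCL f g =ᵐ[hm] fun x => f x * g x := by
  filter_upwards [coeFn_mulFun f g] with x hx
  exact hx

theorem coeFn_conjLp {p : ℝ≥0∞} (f : Lp ℂ p hm) :
    conjLp f =ᵐ[hm] fun x => conj (f x) := MemLp.coeFn_toLp _

theorem coeFn_Vop (f : L2) :
    Vop f =ᵐ[hm] fun x => fourier (-1) x * conj (f x) := by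
  filter_upwards [coeFn_mulCL (fourierLp ⊤ (-1)) (conjLp f), coeFn_conjLp f,
    coeFn_fourierLp ⊤ (-1 : ℤ)] with x h1 h2 h3
  rw [Vop, h1, h2, h3]

theorem inner_mulCL_right (f : Linf) (a b : L2) :
    ⟪a, mulCL f b⟫ = ∫ x, conj (a x) * (f x * b x) ∂hm := by
  rw [inner_L2]
  refine integral_congr_ae ?_
  filter_upwards [coeFn_mulCL f b] with x hx
  rw [hx]

theorem inner_mulCL_left (f : Linf) (a b : L2) :
    ⟪mulCL f a, b⟫ = ∫ x, conj (f x * a x) * b x ∂hm := by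
  rw [inner_L2]
  refine integral_congr_ae ?_
  filter_upwards [coeFn_mulCL f a] with x hx
  rw [hx]

theorem inner_E2_left (m : ℤ) (x : L2) :
    ⟪E2 m, x⟫ = ∫ t, conj (fourier m t) * x t ∂hm := by
  rw [inner_L2]
  refine integral_congr_ae ?_
  filter_upwards [coeFn_fourierLp 2 (m : ℤ)] with t ht
  simp only [E2]
  rw [ht]

theorem inner_E2_mulCL (m : ℤ) (f : Linf) (b : L2) :
    ⟪E2 m, mulCL f b⟫ = ∫ x, conj (fourier m x) * (f x * b x) ∂hm := by
  rw [inner_E2_left]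
  refine integral_congr_ae ?_
  filter_upwards [coeFn_mulCL f b] with x hx
  rw [hx]

theorem inner_E2_mulCL_Einf (m k : ℤ) (b : L2) :
    ⟪E2 m, mulCL (Einf k) b⟫ = ⟪E2 (m - k), b⟫ := by
  rw [inner_E2_mulCL, inner_E2_left]
  refine integral_congr_ae ?_
  filter_upwards [coeFn_fourierLp ⊤ (k : ℤ)] with x hx
  simp only [Einf]
  rw [hx, ← mul_assoc]
  congr 1
  have h3 : m - k = m + -k := by ring
  rw [h3, fourier_add, map_mul, fourier_neg, Complex.conj_conj]

theorem inner_E2_Vop (m : ℤ) (b : L2) :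
    ⟪E2 m, Vop b⟫ = conj ⟪E2 (-m - 1), b⟫ := by
  rw [inner_E2_left, inner_E2_left, ← integral_conj]
  refine integral_congr_ae ?_
  filter_upwards [coeFn_Vop b] with x hx
  have h2 : -m + -1 = -m - 1 := by ring
  rw [hx, map_mul, Complex.conj_conj, ← fourier_neg, ← mul_assoc, ← fourier_add, h2]

theorem inner_Vop_symm (a b : L2) : ⟪a, Vop b⟫ = ⟪b, Vop a⟫ := by
  rw [inner_L2, inner_L2]
  refine integral_congr_ae ?_
  filter_upwards [coeFn_Vop a, coeFn_Vop b] with x ha hb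
  rw [ha, hb]
  ring

theorem Vop_mem_H2perp {h : L2} (hh : h ∈ H2) : Vop h ∈ H2ᗮ := by
  rw [mem_H2perp_iff]
  intro n hn
  rw [inner_E2_Vop, mem_H2_iff.mp hh _ (by omega), map_zero]

theorem Vop_mem_H2 {u : L2} (hu : u ∈ H2ᗮ) : Vop u ∈ H2 := by
  rw [mem_H2_iff]
  intro n hn
  rw [inner_E2_Vop, mem_H2perp_iff.mp hu _ (by omega), map_zero]



/-! ### Norm and orthonormality lemmas -/

theorem inner_E2_E2 (m n : ℤ) : ⟪E2 m, E2 n⟫ = if m = n then 1 else 0 :=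
  (orthonormal_iff_ite.mp (orthonormal_fourier (T := 2 * Real.pi))) m n

theorem norm_E2 (n : ℤ) : ‖E2 n‖ = 1 := (orthonormal_fourier (T := 2 * Real.pi)).1 n

theorem E2_mem_H2 {n : ℤ} (hn : 0 ≤ n) : E2 n ∈ H2 := by
  rw [mem_H2_iff]
  intro m hmm
  rw [inner_E2_E2, if_neg (by omega)]

theorem norm_Einf_le (k : ℤ) : ‖Einf k‖ ≤ 1 := by
  have h := Lp.norm_le_of_ae_bound (μ := hm) (p := ⊤) (f := Einf k) (C := 1) zero_le_one ?_
  · simpa [measureUnivNNReal, measure_univ] using h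
  · filter_upwards [coeFn_fourierLp (T := 2 * Real.pi) ⊤ k] with x hx
    show ‖(Einf k : Linf) x‖ ≤ 1
    simp only [Einf] at hx ⊢
    rw [hx]
    exact le_of_eq (Circle.norm_coe _)

theorem norm_mulCL_Einf_le (k : ℤ) (b : L2) : ‖mulCL (Einf k) b‖ ≤ ‖b‖ := by
  calc ‖mulCL (Einf k) b‖ ≤ ‖Einf k‖ * ‖b‖ := mulFun_norm _ b
    _ ≤ 1 * ‖b‖ := mul_le_mul_of_nonneg_right (norm_Einf_le k) (norm_nonneg b)
    _ = ‖b‖ := one_mul _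

theorem shift_mem_H2 {h : L2} (hh : h ∈ H2) {k : ℤ} (hk : 0 ≤ k) :
    mulCL (Einf k) h ∈ H2 := by
  rw [mem_H2_iff]
  intro m hmm
  rw [inner_E2_mulCL_Einf]
  exact mem_H2_iff.mp hh _ (by omega)

/-! ### Geometric series of Fourier monomials -/

theorem summable_geom_smul {F : Type*} [NormedAddCommGroup F] [NormedSpace ℂ F] [CompleteSpace F] {z : ℂ}
    (hz : ‖z‖ < 1) (v : ℕ → F) (C : ℝ) (hv : ∀ n, ‖v n‖ ≤ C) :
    Summable (fun n : ℕ => (conj z) ^ n • v n) := by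
  apply Summable.of_norm
  refine Summable.of_nonneg_of_le (fun n => norm_nonneg _) (fun n => ?_)
    ((summable_geometric_of_lt_one (norm_nonneg z) hz).mul_right C)
  rw [norm_smul, norm_pow, RCLike.norm_conj]
  exact mul_le_mul_of_nonneg_left (hv n) (by positivity)

theorem summable_fourier_series {z : ℂ} (hz : ‖z‖ < 1) (a : ℤ) :
    Summable (fun n : ℕ => (conj z) ^ n • (fourier ((n : ℤ) + a) : C(Circ, ℂ))) :=
  summable_geom_smul hz _ 1 (fun n => le_of_eq (fourier_norm _))

theorem fourier_int_pow (n : ℕ) (x : Circ) :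
    (fourier (n : ℤ)) x = (fourier 1 x) ^ n := by
  induction n with
  | zero => simp
  | succ k ih =>
    have : ((k + 1 : ℕ) : ℤ) = (k : ℤ) + 1 := by push_cast; ring
    rw [this, fourier_add, ih, pow_succ]

theorem fourier_norm_one (x : Circ) : ‖fourier (1 : ℤ) x‖ = 1 := Circle.norm_coe _

theorem tsum_fourier_apply {z : ℂ} (hz : ‖z‖ < 1) (a : ℤ) (x : Circ) :
    (∑' n : ℕ, (conj z) ^ n • (fourier ((n : ℤ) + a) : C(Circ, ℂ))) x
      = (fourier a x) / (1 - conj z * fourier 1 x) := by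
  have hs := summable_fourier_series hz a
  have hq : ‖conj z * fourier 1 x‖ < 1 := by
    rw [norm_mul, RCLike.norm_conj, fourier_norm_one, mul_one]; exact hz
  have h1 := (ContinuousMap.evalCLM (R := ℂ) x).map_tsum hs
  have h2 : ∀ n : ℕ, (ContinuousMap.evalCLM (R := ℂ) x) ((conj z) ^ n • (fourier ((n : ℤ) + a) : C(Circ, ℂ)))
      = (conj z * fourier 1 x) ^ n * fourier a x := by
    intro n
    show (conj z) ^ n • (fourier ((n : ℤ) + a) x) = _
    rw [smul_eq_mul, fourier_add, fourier_int_pow, mul_pow]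
    ring
  show (ContinuousMap.evalCLM (R := ℂ) x) (∑' n : ℕ, (conj z) ^ n • (fourier ((n : ℤ) + a) : C(Circ, ℂ))) = _
  rw [h1, tsum_congr h2, tsum_mul_right, tsum_geometric_of_norm_lt_one hq,
    div_eq_mul_inv, mul_comm]

theorem denom_ne {z : ℂ} (hz : ‖z‖ < 1) (x : Circ) :
    (1 : ℂ) - conj z * fourier 1 x ≠ 0 := by
  refine sub_ne_zero.2 fun h => absurd (congrArg norm h) ?_
  simp only [norm_mul, RCLike.norm_conj, fourier_norm_one, mul_one, norm_one]
  exact fun hc => absurd hc.symm (ne_of_lt hz)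

theorem inner_tsum {x : L2} {f : ℕ → L2} (hf : Summable f) :
    ⟪x, ∑' n, f n⟫ = ∑' n, ⟪x, f n⟫ :=
  (innerSL ℂ x).map_tsum hf

/-! ### Series expansion of the kernel -/

theorem kC_eq {z : ℂ} (hz : ‖z‖ < 1) :
    kC z hz = ((Real.sqrt (1 - ‖z‖ ^ 2) : ℝ) : ℂ) •
      ∑' n : ℕ, (conj z) ^ n • (fourier ((n : ℤ) + 0) : C(Circ, ℂ)) := by
  ext x
  simp only [ContinuousMap.smul_apply, smul_eq_mul]
  rw [tsum_fourier_apply hz 0 x]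
  show ((Real.sqrt (1 - ‖z‖ ^ 2) : ℝ) : ℂ) / (1 - conj z * fourier 1 x) = _
  rw [fourier_zero, div_eq_mul_inv, div_eq_mul_inv, one_mul]

theorem kLp_eq {z : ℂ} (hz : ‖z‖ < 1) :
    kLp z = ((Real.sqrt (1 - ‖z‖ ^ 2) : ℝ) : ℂ) • ∑' n : ℕ, (conj z) ^ n • E2 ((n : ℤ) + 0) := by
  rw [kLp, dif_pos hz, kC_eq hz, (ContinuousMap.toLp 2 hm ℂ).map_smul,
    (ContinuousMap.toLp 2 hm ℂ).map_tsum (summable_fourier_series hz 0)]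
  congr 1

theorem summable_kseries {z : ℂ} (hz : ‖z‖ < 1) :
    Summable (fun n : ℕ => (conj z) ^ n • E2 ((n : ℤ) + 0)) :=
  summable_geom_smul hz _ 1 (fun n => le_of_eq (norm_E2 _))

theorem inner_E2_kLp_nonneg {z : ℂ} (hz : ‖z‖ < 1) {m : ℤ} (hmm : 0 ≤ m) :
    ⟪E2 m, kLp z⟫ = ((Real.sqrt (1 - ‖z‖ ^ 2) : ℝ) : ℂ) * (conj z) ^ m.toNat := by
  rw [kLp_eq hz, inner_smul_right, inner_tsum (summable_kseries hz)]
  have h2 : ∀ n : ℕ, ⟪E2 m, (conj z) ^ n • E2 ((n : ℤ) + 0)⟫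
      = if n = m.toNat then (conj z) ^ m.toNat else 0 := by
    intro n
    rw [inner_smul_right, inner_E2_E2]
    by_cases hn : n = m.toNat
    · rw [if_pos (by omega), if_pos hn, hn, mul_one]
    · rw [if_neg (by omega), if_neg hn, mul_zero]
  rw [tsum_congr h2, tsum_ite_eq]

theorem kLp_mem_H2 {z : ℂ} (hz : ‖z‖ < 1) : kLp z ∈ H2 := by
  rw [mem_H2_iff]
  intro m hmm
  rw [kLp_eq hz, inner_smul_right, inner_tsum (summable_kseries hz)]
  have h2 : ∀ n : ℕ, ⟪E2 m, (conj z) ^ n • E2 ((n : ℤ) + 0)⟫ = 0 := by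
    intro n
    rw [inner_smul_right, inner_E2_E2, if_neg (by omega), mul_zero]
  rw [tsum_congr h2, tsum_zero, mul_zero]

theorem inner_kLp_self {z : ℂ} (hz : ‖z‖ < 1) : ⟪kLp z, kLp z⟫ = 1 := by
  have hc0 : (0 : ℝ) < 1 - ‖z‖ ^ 2 := by
    nlinarith [norm_nonneg z]
  have hq : ‖(conj z) * z‖ < 1 := by
    rw [norm_mul, RCLike.norm_conj]
    nlinarith [norm_nonneg z]
  nth_rewrite 2 [kLp_eq hz]
  rw [inner_smul_right, inner_tsum (summable_kseries hz)]
  have h2 : ∀ n : ℕ, ⟪kLp z, (conj z) ^ n • E2 ((n : ℤ) + 0)⟫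
      = ((Real.sqrt (1 - ‖z‖ ^ 2) : ℝ) : ℂ) * ((conj z) * z) ^ n := by
    intro n
    rw [inner_smul_right, ← inner_conj_symm, inner_E2_kLp_nonneg hz (by omega)]
    have : ((n : ℤ) + 0).toNat = n := by omega
    rw [this, map_mul, map_pow, Complex.conj_conj, Complex.conj_ofReal]
    rw [mul_pow]
    ring
  rw [tsum_congr h2, tsum_mul_left, tsum_geometric_of_norm_lt_one hq]
  have hzz : (1 : ℂ) - conj z * z = ((1 - ‖z‖ ^ 2 : ℝ) : ℂ) := by
    rw [mul_comm, Complex.mul_conj, Complex.normSq_eq_norm_sq]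
    push_cast
    ring
  rw [hzz, ← mul_assoc, ← Complex.ofReal_mul, Real.mul_self_sqrt (le_of_lt hc0),
    ← Complex.ofReal_inv, ← Complex.ofReal_mul, mul_inv_cancel₀ (ne_of_gt hc0)]
  exact Complex.ofReal_one



/-! ### Series expansion of the Möbius transform -/

theorem ofReal_one_sub_normsq (z : ℂ) :
    ((1 - ‖z‖ ^ 2 : ℝ) : ℂ) = 1 - conj z * z := by
  rw [mul_comm, Complex.mul_conj, Complex.normSq_eq_norm_sq]
  push_cast
  ring

theorem phiC_eq {z : ℂ} (hz : ‖z‖ < 1) :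
    phiC z hz = z • (1 : C(Circ, ℂ)) - ((1 - ‖z‖ ^ 2 : ℝ) : ℂ) •
      ∑' n : ℕ, (conj z) ^ n • (fourier ((n : ℤ) + 1) : C(Circ, ℂ)) := by
  ext x
  simp only [ContinuousMap.sub_apply, ContinuousMap.smul_apply, ContinuousMap.one_apply,
    smul_eq_mul]
  rw [tsum_fourier_apply hz 1 x]
  show (z - fourier 1 x) / (1 - conj z * fourier 1 x) = _
  have hd := denom_ne hz x
  rw [ofReal_one_sub_normsq]
  have key : ∀ w : ℂ, 1 - conj z * w ≠ 0 →
      (z - w) / (1 - conj z * w)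
        = z * 1 - (1 - conj z * z) * (w / (1 - conj z * w)) := by
    intro w hw
    rw [eq_sub_iff_add_eq, ← mul_div_assoc, ← add_div, div_eq_iff hw]
    ring
  exact key (fourier 1 x) hd

set_option maxHeartbeats 1000000 in
/-- Multiplication by a bounded function, as a continuous linear map in the symbol. -/
def mulCLM : Linf →L[ℂ] (L2 →L[ℂ] L2) :=
  LinearMap.mkContinuous
    { toFun := mulCL
      map_add' := fun f g => by
        refine ContinuousLinearMap.ext fun b => ?_
        apply Lp.ext
        filter_upwards [coeFn_mulCL (f + g) b, coeFn_mulCL f b, coeFn_mulCL g b,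
          Lp.coeFn_add f g, Lp.coeFn_add (mulCL f b) (mulCL g b)] with x h1 h2 h3 h4 h5
        simp only [ContinuousLinearMap.add_apply]
        rw [h1, h5, Pi.add_apply, h2, h3, h4, Pi.add_apply, add_mul]
      map_smul' := fun c f => by
        refine ContinuousLinearMap.ext fun b => ?_
        apply Lp.ext
        filter_upwards [coeFn_mulCL (c • f) b, coeFn_mulCL f b,
          Lp.coeFn_smul c f, Lp.coeFn_smul c (mulCL f b)] with x h1 h2 h3 h4
        simp only [RingHom.id_apply, ContinuousLinearMap.smul_apply]
        rw [h1, h4, Pi.smul_apply, h2, h3, Pi.smul_apply, smul_eq_mul, smul_eq_mul, mul_assoc] }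
    1
    (fun f => by
      rw [one_mul]
      exact ContinuousLinearMap.opNorm_le_bound _ (norm_nonneg f) (fun b => mulFun_norm f b))

theorem mulCLM_apply (f : Linf) : mulCLM f = mulCL f := rfl

theorem summable_phiseries (z : ℂ) (hz : ‖z‖ < 1) (b : L2) :
    Summable (fun n : ℕ => (conj z) ^ n • mulCL (Einf ((n : ℤ) + 1)) b) :=
  summable_geom_smul hz _ ‖b‖ (fun n => norm_mulCL_Einf_le _ b)

theorem mulCL_one (b : L2) : mulCL (ContinuousMap.toLp ⊤ hm ℂ (1 : C(Circ, ℂ))) b = b := by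
  apply Lp.ext
  filter_upwards [coeFn_mulCL (ContinuousMap.toLp ⊤ hm ℂ (1 : C(Circ, ℂ))) b,
    ContinuousMap.coeFn_toLp (p := ⊤) hm (𝕜 := ℂ) (1 : C(Circ, ℂ))] with x h1 h2
  rw [h1, h2]
  simp

theorem mulCL_phiInf_apply {z : ℂ} (hz : ‖z‖ < 1) (b : L2) :
    mulCL (phiInf z) b = z • b - ((1 - ‖z‖ ^ 2 : ℝ) : ℂ) •
      ∑' n : ℕ, (conj z) ^ n • mulCL (Einf ((n : ℤ) + 1)) b := by
  have hΦ : ∀ F : C(Circ, ℂ), mulCL (ContinuousMap.toLp ⊤ hm ℂ F) b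
      = ((mulCLM.flip b).comp (ContinuousMap.toLp ⊤ hm ℂ)) F := fun F => rfl
  have e1 : ((mulCLM.flip b).comp (ContinuousMap.toLp ⊤ hm ℂ)) 1 = b := mulCL_one b
  have e2 : ∀ n : ℕ, ((mulCLM.flip b).comp (ContinuousMap.toLp ⊤ hm ℂ))
      ((conj z) ^ n • (fourier ((n : ℤ) + 1) : C(Circ, ℂ)))
        = (conj z) ^ n • mulCL (Einf ((n : ℤ) + 1)) b := by
    intro n
    rw [_root_.map_smul]
    rfl
  rw [phiInf, dif_pos hz, hΦ, phiC_eq hz, map_sub, _root_.map_smul, _root_.map_smul,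
    ContinuousLinearMap.map_tsum _ (summable_fourier_series hz 1), e1, tsum_congr e2]

theorem coeFn_phiInf {z : ℂ} (hz : ‖z‖ < 1) :
    phiInf z =ᵐ[hm] fun x => (z - fourier 1 x) / (1 - conj z * fourier 1 x) := by
  rw [phiInf, dif_pos hz]
  exact ContinuousMap.coeFn_toLp hm (𝕜 := ℂ) (phiC z hz)

theorem phi_unimodular {z : ℂ} (hz : ‖z‖ < 1) :
    ∀ᵐ x ∂hm, conj ((phiInf z : Linf) x) * (phiInf z : Linf) x = 1 := by
  filter_upwards [coeFn_phiInf hz] with x hx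
  rw [hx]
  have h1 : ‖fourier (1 : ℤ) x‖ = 1 := fourier_norm_one x
  have hw : conj (fourier (1 : ℤ) x) * fourier (1 : ℤ) x = 1 := by
    rw [mul_comm, Complex.mul_conj, Complex.normSq_eq_norm_sq, h1]
    norm_num
  have hd := denom_ne hz x
  have hnum : conj (z - fourier 1 x) * (z - fourier 1 x)
      = (conj (1 - conj z * fourier 1 x)) * (1 - conj z * fourier 1 x) := by
    simp only [map_sub, map_mul, map_one, Complex.conj_conj]
    linear_combination ((1 : ℂ) - conj z * z) * hw
  rw [map_div₀, div_mul_div_comm, hnum, div_self]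
  apply mul_ne_zero ?_ hd
  intro hcon
  apply hd
  have := congrArg (starRingEnd ℂ) hcon
  simpa using this

theorem inner_mulCL_phi_phi {z : ℂ} (hz : ‖z‖ < 1) (a b : L2) :
    ⟪mulCL (phiInf z) a, mulCL (phiInf z) b⟫ = ⟪a, b⟫ := by
  rw [inner_L2, inner_L2]
  refine integral_congr_ae ?_
  filter_upwards [coeFn_mulCL (phiInf z) a, coeFn_mulCL (phiInf z) b,
    phi_unimodular hz] with x h1 h2 h3
  rw [h1, h2, map_mul]
  calc conj ((phiInf z : Linf) x) * conj (a x) * ((phiInf z : Linf) x * b x)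
      = (conj ((phiInf z : Linf) x) * (phiInf z : Linf) x) * (conj (a x) * b x) := by ring
    _ = conj (a x) * b x := by rw [h3, one_mul]

theorem mulCL_phi_mem_H2 {z : ℂ} (hz : ‖z‖ < 1) {h : L2} (hh : h ∈ H2) :
    mulCL (phiInf z) h ∈ H2 := by
  rw [mem_H2_iff]
  intro m hmm
  rw [mulCL_phiInf_apply hz, inner_sub_right, inner_smul_right, inner_smul_right,
    inner_tsum (summable_phiseries z hz h)]
  have h2 : ∀ n : ℕ, ⟪E2 m, (conj z) ^ n • mulCL (Einf ((n : ℤ) + 1)) h⟫ = 0 := by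
    intro n
    rw [inner_smul_right, inner_E2_mulCL_Einf, mem_H2_iff.mp hh _ (by omega), mul_zero]
  rw [tsum_congr h2, tsum_zero, mem_H2_iff.mp hh _ hmm]
  simp



/-! ### Vop algebra -/

theorem Vop_add (a b : L2) : Vop (a + b) = Vop a + Vop b := by
  apply Lp.ext
  filter_upwards [coeFn_Vop (a + b), coeFn_Vop a, coeFn_Vop b,
    Lp.coeFn_add a b, Lp.coeFn_add (Vop a) (Vop b)] with x h1 h2 h3 h4 h5
  rw [h1, h5, Pi.add_apply, h2, h3, h4, Pi.add_apply, map_add]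
  ring

theorem Vop_smul (c : ℂ) (a : L2) : Vop (c • a) = conj c • Vop a := by
  apply Lp.ext
  filter_upwards [coeFn_Vop (c • a), coeFn_Vop a,
    Lp.coeFn_smul c a, Lp.coeFn_smul (conj c) (Vop a)] with x h1 h2 h3 h4
  rw [h1, h4, Pi.smul_apply, h2, h3, Pi.smul_apply, smul_eq_mul, smul_eq_mul, map_mul]
  ring

theorem rankOne_apply (x y w : L2) : rankOne x y w = ⟪y, w⟫ • x := rfl

theorem toep_apply (f : Linf) (x : L2) : toep f x = Pp (mulCL f (Pp x)) := rfl

theorem hank_apply (f : Linf) (x : L2) : hank f x = Qm (mulCL f (Pp x)) := rfl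

theorem hank_mem_H2perp (f : Linf) (x : L2) : hank f x ∈ H2ᗮ := Qm_mem _

theorem mulCL_comm (f f' : Linf) (x : L2) :
    mulCL f (mulCL f' x) = mulCL f' (mulCL f x) := by
  apply Lp.ext
  filter_upwards [coeFn_mulCL f (mulCL f' x), coeFn_mulCL f' x,
    coeFn_mulCL f' (mulCL f x), coeFn_mulCL f x] with t h1 h2 h3 h4
  rw [h1, h2, h3, h4]
  ring

/-! ### Steps (1)-(3) of the proof -/

theorem toep_phi_eq {z : ℂ} (hz : ‖z‖ < 1) {h : L2} (hh : h ∈ H2) :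
    toep (phiInf z) h = mulCL (phiInf z) h := by
  rw [toep_apply, Pp_eq_self hh, Pp_eq_self (mulCL_phi_mem_H2 hz hh)]

theorem hank_mulCL_phi (g : Linf) {z : ℂ} (hz : ‖z‖ < 1) {h : L2} (hh : h ∈ H2) :
    hank g (mulCL (phiInf z) h) = Qm (mulCL (phiInf z) (hank g h)) := by
  rw [hank_apply, Pp_eq_self (mulCL_phi_mem_H2 hz hh), mulCL_comm, hank_apply, Pp_eq_self hh]
  have hdec : mulCL g h = Pp (mulCL g h) + Qm (mulCL g h) := by rw [Qm_apply]; abel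
  conv_lhs => rw [hdec]
  rw [map_add, map_add, Qm_eq_zero (mulCL_phi_mem_H2 hz (Pp_mem _)), zero_add]

theorem inner_Qm_phi {z : ℂ} (hz : ‖z‖ < 1) (v u : L2) :
    ⟪Qm (mulCL (phiInf z) v), Qm (mulCL (phiInf z) u)⟫
      = ⟪v, u⟫ - ⟪Pp (mulCL (phiInf z) v), Pp (mulCL (phiInf z) u)⟫ := by
  have := inner_decomp (mulCL (phiInf z) v) (mulCL (phiInf z) u)
  rw [inner_mulCL_phi_phi hz] at this
  linear_combination -this

/-! ### Step (4): the projection formula -/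

theorem coeff_ext {x y : L2} (h : ∀ m : ℤ, ⟪E2 m, x⟫ = ⟪E2 m, y⟫) : x = y := by
  apply fourierBasis.repr.injective
  apply lp.ext
  funext m
  have := h m
  rwa [inner_E2, inner_E2] at this

theorem sqrt_sq {z : ℂ} (hz : ‖z‖ < 1) :
    ((Real.sqrt (1 - ‖z‖ ^ 2) : ℝ) : ℂ) * ((Real.sqrt (1 - ‖z‖ ^ 2) : ℝ) : ℂ)
      = ((1 - ‖z‖ ^ 2 : ℝ) : ℂ) := by
  rw [← Complex.ofReal_mul, Real.mul_self_sqrt (by nlinarith [norm_nonneg z])]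

theorem inner_Vop_kLp {z : ℂ} (hz : ‖z‖ < 1) (u : L2) :
    ⟪Vop u, kLp z⟫ = ((Real.sqrt (1 - ‖z‖ ^ 2) : ℝ) : ℂ)
      * ∑' j : ℕ, (conj z) ^ j * ⟪E2 (-(j : ℤ) - 1), u⟫ := by
  rw [kLp_eq hz, inner_smul_right, inner_tsum (summable_kseries hz)]
  congr 1
  refine tsum_congr fun j => ?_
  rw [inner_smul_right]
  congr 1
  rw [← inner_conj_symm, inner_E2_Vop, Complex.conj_conj]
  norm_num

theorem key4 {z : ℂ} (hz : ‖z‖ < 1) {u : L2} (hu : u ∈ H2ᗮ) :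
    Pp (mulCL (phiInf z) u) = -⟪Vop u, kLp z⟫ • kLp z := by
  apply coeff_ext
  intro m
  rcases lt_or_ge m 0 with hmm | hmm
  · rw [mem_H2_iff.mp (Pp_mem _) m hmm, inner_smul_right,
      mem_H2_iff.mp (kLp_mem_H2 hz) m hmm, mul_zero]
  · rw [inner_Pp_left (E2_mem_H2 hmm), mulCL_phiInf_apply hz, inner_sub_right,
      inner_smul_right, inner_smul_right, inner_tsum (summable_phiseries z hz u),
      mem_H2perp_iff.mp hu m hmm, mul_zero, zero_sub]
    have h2 : ∀ n : ℕ, ⟪E2 m, (conj z) ^ n • mulCL (Einf ((n : ℤ) + 1)) u⟫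
        = (conj z) ^ n * ⟪E2 (m - ((n : ℤ) + 1)), u⟫ := fun n => by
      rw [inner_smul_right, inner_E2_mulCL_Einf]
    rw [tsum_congr h2]
    -- reindex the sum
    have hinj : Function.Injective (fun j : ℕ => m.toNat + j) := fun a b hab => by
      simpa using hab
    have hsupp : Function.support (fun n : ℕ => (conj z) ^ n * ⟪E2 (m - ((n : ℤ) + 1)), u⟫)
        ⊆ Set.range (fun j : ℕ => m.toNat + j) := by
      intro n hn
      rcases lt_or_ge n m.toNat with hlt | hge
      · exfalso
        simp only [Function.mem_support] at hn
        apply hn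
        show (conj z) ^ n * ⟪E2 (m - ((n : ℤ) + 1)), u⟫ = 0
        rw [mem_H2perp_iff.mp hu (m - ((n : ℤ) + 1)) (by omega), mul_zero]
      · exact ⟨n - m.toNat, by show m.toNat + (n - m.toNat) = n; omega⟩
    have Slem := hinj.tsum_eq hsupp
    rw [← Slem]
    have h3 : ∀ j : ℕ, (conj z) ^ (m.toNat + j) * ⟪E2 (m - (((m.toNat + j : ℕ) : ℤ) + 1)), u⟫
        = (conj z) ^ m.toNat * ((conj z) ^ j * ⟪E2 (-(j : ℤ) - 1), u⟫) := by
      intro j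
      rw [pow_add]
      have hidx : m - (((m.toNat + j : ℕ) : ℤ) + 1) = -(j : ℤ) - 1 := by omega
      rw [hidx]
      ring
    rw [tsum_congr h3, tsum_mul_left, inner_smul_right, inner_E2_kLp_nonneg hz hmm,
      inner_Vop_kLp hz, ← sqrt_sq hz]
    ring


/-! ### Symmetry lemmas and the final assembly -/

theorem inner_Qm_right_perp {y : L2} (hy : y ∈ H2ᗮ) (x : L2) : ⟪Qm x, y⟫ = ⟪x, y⟫ := by
  rw [← inner_conj_symm, inner_Qm_left hy, inner_conj_symm]

theorem swapSym (g : Linf) (a b : L2) : ⟪mulCL g a, Vop b⟫ = ⟪mulCL g b, Vop a⟫ := by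
  rw [inner_L2, inner_L2]
  refine integral_congr_ae ?_
  filter_upwards [coeFn_mulCL g a, coeFn_mulCL g b, coeFn_Vop a, coeFn_Vop b]
    with x h1 h2 h3 h4
  rw [h1, h2, h3, h4, map_mul, map_mul]
  ring

theorem hank_Vop_swap (g : Linf) {a b : L2} (ha : a ∈ H2) (hb : b ∈ H2) :
    ⟪hank g a, Vop b⟫ = ⟪hank g b, Vop a⟫ := by
  rw [hank_apply, hank_apply, Pp_eq_self ha, Pp_eq_self hb,
    inner_Qm_right_perp (Vop_mem_H2perp hb), inner_Qm_right_perp (Vop_mem_H2perp ha),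
    swapSym]

theorem VopHank (g : Linf) {z : ℂ} (hz : ‖z‖ < 1) {h : L2} (hh : h ∈ H2) :
    ⟪Vop (hank g h), kLp z⟫ = conj ⟪hank g (kLp z), Vop h⟫ := by
  rw [← inner_conj_symm]
  congr 1
  rw [inner_Vop_symm]
  exact hank_Vop_swap g hh (kLp_mem_H2 hz)

theorem main_scalar (f g : Linf) {z : ℂ} (hz : ‖z‖ < 1) {t h : L2}
    (ht : t ∈ H2) (hh : h ∈ H2) :
    ⟪hank f t, hank g h⟫
        - ⟪hank f (toep (phiInf z) t), hank g (toep (phiInf z) h)⟫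
      = conj ⟪hank g (kLp z), Vop h⟫ * ⟪hank f (kLp z), Vop t⟫ := by
  rw [toep_phi_eq hz ht, toep_phi_eq hz hh, hank_mulCL_phi f hz ht, hank_mulCL_phi g hz hh,
    inner_Qm_phi hz, key4 hz (hank_mem_H2perp f t), key4 hz (hank_mem_H2perp g h),
    inner_smul_left, inner_smul_right, inner_kLp_self hz,
    VopHank f hz ht, VopHank g hz hh]
  rw [map_neg, Complex.conj_conj]
  ring

theorem inner_perp_Vop_Pp {w : L2} (hw : w ∈ H2ᗮ) (x : L2) :
    ⟪w, Vop x⟫ = ⟪w, Vop (Pp x)⟫ := by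
  have hx : x = Pp x + Qm x := by rw [Qm_apply]; abel
  conv_lhs => rw [hx]
  rw [Vop_add, inner_add_right, inner_perp_H2 hw (Vop_mem_H2 (Qm_mem x)), add_zero]



theorem hank_Pp (f : Linf) (x : L2) : hank f x = hank f (Pp x) := by
  rw [hank_apply, hank_apply, Pp_eq_self (Pp_mem x)]

theorem toep_Pp (f : Linf) (x : L2) : toep f x = toep f (Pp x) := by
  rw [toep_apply, toep_apply, Pp_eq_self (Pp_mem x)]


/-- For `f, g ∈ L^∞` and `z ∈ 𝔻`, as operators on `H²`:
`H_f* H_g − T_{φ_z}* H_f* H_g T_{φ_z} = V [(H_f k_z) ⊗ (H_g k_z)] V`. -/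
theorem statement_14 (f g : Linf) (z : ℂ) (hz : ‖z‖ < 1) :
    ∀ h : L2, h ∈ H2 →
      (ContinuousLinearMap.adjoint (hank f) ∘L hank g
          - ContinuousLinearMap.adjoint (toep (phiInf z)) ∘L
              ContinuousLinearMap.adjoint (hank f) ∘L hank g ∘L toep (phiInf z)) h
        = Vop (rankOne (hank f (kLp z)) (hank g (kLp z)) (Vop h)) := by
  intro h hh
  apply ext_inner_left ℂ
  intro t
  simp only [ContinuousLinearMap.sub_apply, ContinuousLinearMap.comp_apply]
  rw [inner_sub_right, ContinuousLinearMap.adjoint_inner_right,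
    ContinuousLinearMap.adjoint_inner_right, ContinuousLinearMap.adjoint_inner_right,
    rankOne_apply, Vop_smul, inner_smul_right, inner_Vop_symm t (hank f (kLp z)),
    hank_Pp f t, toep_Pp (phiInf z) t, inner_perp_Vop_Pp (hank_mem_H2perp f (kLp z)) t]
  exact main_scalar f g hz (Pp_mem t) hh

end HTTO
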